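/- For every positive integer t, the element a = π^{−2t+1} of K = F_{2^τ}((π)) has Artin–Schreier defect D(a) = (π^{−2t+1}); that is, |h² + h + π^{−2t+1}| ≥ |π^{−2t+1}| for all h ∈ K, with equality attained (e.g. at h = 0). -/

import Mathlib

noncomputable section

/-- The finite field with `2 ^ τ` elements. -/
abbrev Fq (τ : ℕ) := GaloisField 2 τ

/-- The field of formal Laurent series `K = F_{2^τ}((π))`. -/
abbrev Kk (τ : ℕ) := LaurentSeries (Fq τ)

/-- The ring of integers `O = F_{2^τ}[[π]]`. -/
abbrev Ok (τ : ℕ) := PowerSeries (Fq τ)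

/-- The Artin–Schreier defect `D(a) = ⋂_{h ∈ K} (h² + h + a)`, an intersection of
principal fractional `O`-ideals (as `O`-submodules of `K`). -/
def ASdefect (τ : ℕ) (a : Kk τ) : Submodule (Ok τ) (Kk τ) :=
  ⨅ h : Kk τ, Submodule.span (Ok τ) {h ^ 2 + h + a}

/-- The uniformizer `π` of `K`, viewed as a Laurent series. -/
def pp (τ : ℕ) : Kk τ := algebraMap (Ok τ) (Kk τ) PowerSeries.X

/-!
Write `a = π^z` with `z = -2t + 1`, negative and odd. If `ν(h) ≥ 0` then `ν(h² + h) ≥ 0 > z`;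
if `ν(h) < 0` then `ν(h² + h) = 2ν(h)` is even. Either way `ν(h² + h) ≠ ν(a)`, so by the
ultrametric inequality `ν(h² + h + a) = min(ν(h² + h), z) ≤ z`, i.e. `|h² + h + a| ≥ |a|`.
Hence `a` lies in every ideal `(h² + h + a)`, and `h = 0` gives the reverse inclusion.
-/

namespace HahnSeries

theorem orderTop_add_eq_min_of_ne {Γ R : Type*} [LinearOrder Γ] [AddMonoid R]
    {x y : HahnSeries Γ R} (hxy : x.orderTop ≠ y.orderTop) :
    (x + y).orderTop = min x.orderTop y.orderTop := by
  rcases hxy.lt_or_gt with hlt | hlt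
  · rw [orderTop_add_eq_left hlt, min_eq_left hlt.le]
  · rw [orderTop_add_eq_right hlt, min_eq_right hlt.le]

theorem ne_zero_and_order_le_of_orderTop_le {Γ R : Type*} [Zero Γ] [LinearOrder Γ] [Zero R]
    {x : HahnSeries Γ R} {g : Γ} (hx : x.orderTop ≤ g) : x ≠ 0 ∧ x.order ≤ g := by
  have hx0 : x ≠ 0 := fun h => by simp [h] at hx
  refine ⟨hx0, ?_⟩
  rwa [← WithTop.coe_le_coe, order_eq_orderTop_of_ne_zero hx0]

end HahnSeries

namespace LaurentSeries

open HahnSeries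

section Order

variable {R : Type*} [Semiring R] [NoZeroDivisors R]

theorem orderTop_sq_add_self_of_order_neg {h : LaurentSeries R} (hneg : h.order < 0) :
    (h ^ 2 + h).orderTop = (2 * h.order : ℤ) := by
  have h0 : h ≠ 0 := fun h0 => by simp [h0] at hneg
  have hsq : (h ^ 2).orderTop = (2 * h.order : ℤ) := by
    rw [pow_two, orderTop_mul, ← order_eq_orderTop_of_ne_zero h0]
    norm_cast
    ring
  have hlt : (h ^ 2).orderTop < h.orderTop := by
    rw [hsq, ← order_eq_orderTop_of_ne_zero h0]
    exact_mod_cast (by omega : 2 * h.order < h.order)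
  rw [orderTop_add_eq_left hlt, hsq]

theorem orderTop_sq_add_self_ne_of_odd_of_neg {z : ℤ} (hodd : Odd z) (hz : z < 0)
    (h : LaurentSeries R) : (h ^ 2 + h).orderTop ≠ z := by
  rcases lt_or_ge h.order 0 with hneg | hnonneg
  · rw [orderTop_sq_add_self_of_order_neg hneg]
    obtain ⟨k, rfl⟩ := hodd
    exact_mod_cast (by omega : 2 * h.order ≠ 2 * k + 1)
  · have hh : 0 ≤ h.orderTop := zero_le_orderTop_iff.mpr hnonneg
    have hsq : 0 ≤ (h ^ 2).orderTop := by
      rw [pow_two, orderTop_mul]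
      exact add_nonneg hh hh
    have hsum : 0 ≤ (h ^ 2 + h).orderTop := (le_min hsq hh).trans min_orderTop_le_orderTop_add
    exact ne_of_gt (lt_of_lt_of_le (by exact_mod_cast hz) hsum)

theorem orderTop_sq_add_self_add_le {z : ℤ} (hodd : Odd z) (hz : z < 0) {a : LaurentSeries R}
    (ha : a.orderTop = z) (h : LaurentSeries R) : (h ^ 2 + h + a).orderTop ≤ z := by
  rw [orderTop_add_eq_min_of_ne (ha ▸ orderTop_sq_add_self_ne_of_odd_of_neg hodd hz h), ha]
  exact min_le_right _ _

end Order

theorem mem_span_singleton_of_order_le {F : Type*} [Field F] {x y : LaurentSeries F}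
    (hx : x ≠ 0) (hxy : x.order ≤ y.order) : y ∈ Submodule.span (PowerSeries F) {x} := by
  rcases eq_or_ne y 0 with rfl | hy
  · exact Submodule.zero_mem _
  have hq : 0 ≤ (y * x⁻¹).order := by
    have hinv : x⁻¹.order = -x.order := by
      have := order_mul hx (inv_ne_zero hx)
      rw [mul_inv_cancel₀ hx, order_one] at this
      omega
    rw [order_mul hy (inv_ne_zero hx), hinv]
    omega
  rw [Submodule.mem_span_singleton]
  refine ⟨PowerSeries.X ^ (y * x⁻¹).order.toNat * (y * x⁻¹).powerSeriesPart, ?_⟩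
  rw [Algebra.smul_def, coe_algebraMap, X_order_mul_powerSeriesPart (by omega),
    mul_assoc, inv_mul_cancel₀ hx, mul_one]

end LaurentSeries

open HahnSeries LaurentSeries

lemma pp_zpow (τ : ℕ) (z : ℤ) : pp τ ^ z = single z (1 : Fq τ) := by
  have hpp : pp τ = single (1 : ℤ) (1 : Fq τ) := by
    rw [pp, coe_algebraMap]
    exact ofPowerSeries_X
  rw [hpp, ← RatFunc.single_zpow]

theorem ASdefect_pi_odd_neg_pow_general (τ : ℕ) (t : ℕ) (ht : 0 < t) :
    ASdefect τ (pp τ ^ (-2 * (t : ℤ) + 1)) =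
        Submodule.span (Ok τ) {pp τ ^ (-2 * (t : ℤ) + 1)} ∧
      (∀ h : Kk τ, h ^ 2 + h + pp τ ^ (-2 * (t : ℤ) + 1) ≠ 0 ∧
        HahnSeries.order (h ^ 2 + h + pp τ ^ (-2 * (t : ℤ) + 1)) ≤ -2 * (t : ℤ) + 1) ∧
      HahnSeries.order ((0 : Kk τ) ^ 2 + 0 + pp τ ^ (-2 * (t : ℤ) + 1)) =
        -2 * (t : ℤ) + 1 := by
  set z : ℤ := -2 * (t : ℤ) + 1
  have hodd : Odd z := ⟨-t, by ring⟩
  have hz : z < 0 := by omega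
  have ha : pp τ ^ z ≠ 0 := by
    rw [pp_zpow]
    exact single_ne_zero one_ne_zero
  have haTop : (pp τ ^ z).orderTop = z := by
    rw [pp_zpow]
    exact orderTop_single one_ne_zero
  have haOrder : (pp τ ^ z).order = z := by
    rw [pp_zpow]
    exact order_single one_ne_zero
  have hbound (h : Kk τ) : h ^ 2 + h + pp τ ^ z ≠ 0 ∧ (h ^ 2 + h + pp τ ^ z).order ≤ z :=
    ne_zero_and_order_le_of_orderTop_le (orderTop_sq_add_self_add_le hodd hz haTop h)
  refine ⟨le_antisymm ?_ ?_, hbound, by simpa using haOrder⟩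
  · refine (iInf_le _ 0).trans ?_
    simp
  · refine le_iInf fun h => ?_
    rw [Submodule.span_le, Set.singleton_subset_iff]
    exact mem_span_singleton_of_order_le (hbound h).1 ((hbound h).2.trans haOrder.ge)

/-- for every `t > 0`, the element `a = π^{-2t+1}` has Artin–Schreier
defect `D(a) = (π^{-2t+1})`; that is, `|h² + h + a| ≥ |a|` (equivalently
`ν(h² + h + a) ≤ -2t + 1`) for every `h ∈ K`, with equality attained at `h = 0`. -/
theorem ASdefect_pi_odd_neg_pow (τ : ℕ) (hτ : 0 < τ) (t : ℕ) (ht : 0 < t) :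
    ASdefect τ (pp τ ^ (-2 * (t : ℤ) + 1)) =
        Submodule.span (Ok τ) {pp τ ^ (-2 * (t : ℤ) + 1)} ∧
      (∀ h : Kk τ, h ^ 2 + h + pp τ ^ (-2 * (t : ℤ) + 1) ≠ 0 ∧
        HahnSeries.order (h ^ 2 + h + pp τ ^ (-2 * (t : ℤ) + 1)) ≤ -2 * (t : ℤ) + 1) ∧
      HahnSeries.order ((0 : Kk τ) ^ 2 + 0 + pp τ ^ (-2 * (t : ℤ) + 1)) =
        -2 * (t : ℤ) + 1 :=
  ASdefect_pi_odd_neg_pow_general τ t ht
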